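/- arXiv:2405.04254 — 6 statements merged into one kernel-verified Lean document; each statement's English description precedes it below -/
import Mathlib

section
/- (Theorem 1.) Suppose ϑ ≥ ρ₁μ/n. Let k ∈ ℕ, let β ∈ ℝ^p satisfy ‖β‖₀ ≤ k, and let β⁺ be a minimizer of γ ↦ h(γ; β) over the set {γ ∈ ℝ^p : ‖γ‖₀ ≤ k}. Then ℓ(β⁺) ≤ ℓ(β). -/
open scoped BigOperators RealInnerProductSpace

noncomputable section

/-- GLM negative log-likelihood `L(β) = (1/n) ∑ⱼ [b(Xⱼᵀβ) − yⱼ Xⱼᵀβ]`. -/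
def glmLoss {n p : ℕ} (X : Fin n → EuclideanSpace ℝ (Fin p)) (y : Fin n → ℝ)
    (b : ℝ → ℝ) (β : EuclideanSpace ℝ (Fin p)) : ℝ :=
  (1 / (n : ℝ)) * ∑ j, (b ⟪X j, β⟫ - y j * ⟪X j, β⟫)

/-- Surrogate loss `ℓ(β) = L(β) − βᵀv`. -/
def surrLoss {n p : ℕ} (X : Fin n → EuclideanSpace ℝ (Fin p)) (y : Fin n → ℝ)
    (b : ℝ → ℝ) (v : EuclideanSpace ℝ (Fin p)) (β : EuclideanSpace ℝ (Fin p)) : ℝ :=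
  glmLoss X y b β - ⟪β, v⟫

/-- Gradient of the surrogate loss:
`∇ℓ(β) = (1/n) ∑ⱼ (b'(Xⱼᵀβ) − yⱼ) Xⱼ − v`. -/
def surrGrad {n p : ℕ} (X : Fin n → EuclideanSpace ℝ (Fin p)) (y : Fin n → ℝ)
    (b : ℝ → ℝ) (v : EuclideanSpace ℝ (Fin p)) (β : EuclideanSpace ℝ (Fin p)) :
    EuclideanSpace ℝ (Fin p) :=
  (1 / (n : ℝ)) • (∑ j, (deriv b ⟪X j, β⟫ - y j) • X j) - v

/-- Quadratic approximation `h(γ; β) = ℓ(β) + ⟨γ − β, ∇ℓ(β)⟩ + (ϑ/2)‖γ − β‖₂²`. -/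
def quadApprox {n p : ℕ} (X : Fin n → EuclideanSpace ℝ (Fin p)) (y : Fin n → ℝ)
    (b : ℝ → ℝ) (v : EuclideanSpace ℝ (Fin p)) (ϑ : ℝ)
    (γ β : EuclideanSpace ℝ (Fin p)) : ℝ :=
  surrLoss X y b v β + ⟪γ - β, surrGrad X y b v β⟫ + ϑ / 2 * ‖γ - β‖ ^ 2

/-- The ℓ₀ "norm": number of nonzero coordinates. -/
def normZero {p : ℕ} (β : EuclideanSpace ℝ (Fin p)) : ℕ :=
  {j | β j ≠ 0}.ncard

/-!
Because `b'' ≤ μ` and `ρ₁` bounds the quadratic form of `𝕏ᵀ𝕏`, the surrogate loss is majorized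
by its quadratic approximation: `ℓ(γ) ≤ h(γ; β)` for all `γ` once `ϑ ≥ ρ₁μ/n`. Since `β` itself is
feasible, `ℓ(β⁺) ≤ h(β⁺; β) ≤ h(β; β) = ℓ(β)`.
-/

open Matrix
open scoped MatrixOrder

theorem ConvexOn.add_mul_sub_le_of_hasDerivAt {S : Set ℝ} {g : ℝ → ℝ} {g' x y : ℝ}
    (hg : ConvexOn ℝ S g) (hx : x ∈ S) (hy : y ∈ S) (hd : HasDerivAt g g' x) :
    g x + g' * (y - x) ≤ g y := by
  rcases lt_trichotomy x y with hxy | rfl | hyx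
  · have := hg.le_slope_of_hasDerivAt hx hy hxy hd
    rw [slope_def_field, le_div_iff₀ (sub_pos.mpr hxy)] at this
    linarith
  · simp
  · have := hg.slope_le_of_hasDerivAt hy hx hyx hd
    rw [slope_def_field, div_le_iff₀ (sub_pos.mpr hyx)] at this
    linarith

/-- The function `x ↦ μ/2 x² - f x` is convex, so it lies above its tangent line at `a`. -/
theorem le_add_deriv_mul_add_sq_of_deriv_deriv_le {f : ℝ → ℝ} {μ : ℝ} (hf : ContDiff ℝ 2 f)
    (hf'' : ∀ x, deriv (deriv f) x ≤ μ) (a c : ℝ) :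
    f (a + c) ≤ f a + deriv f a * c + μ / 2 * c ^ 2 := by
  have hg' (x : ℝ) : HasDerivAt (fun x => μ / 2 * x ^ 2 - f x) (μ * x - deriv f x) x :=
    (((hasDerivAt_pow 2 x).const_mul (μ / 2)).sub
      (hf.differentiable two_ne_zero x).hasDerivAt).congr_deriv (by push_cast; ring)
  have hg'' (x : ℝ) : HasDerivAt (fun x => μ * x - deriv f x) (μ - deriv (deriv f) x) x :=
    (((hasDerivAt_id x).const_mul μ).sub
      (hf.differentiable_deriv_two x).hasDerivAt).congr_deriv (by ring)
  have hconvex : ConvexOn ℝ Set.univ fun x => μ / 2 * x ^ 2 - f x :=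
    convexOn_of_hasDerivWithinAt2_nonneg convex_univ
      (fun x _ => (hg' x).continuousAt.continuousWithinAt) (fun x _ => (hg' x).hasDerivWithinAt)
      (fun x _ => (hg'' x).hasDerivWithinAt) fun x _ => sub_nonneg.mpr (hf'' x)
  have := hconvex.add_mul_sub_le_of_hasDerivAt (Set.mem_univ a) (Set.mem_univ (a + c)) (hg' a)
  linear_combination this

theorem Matrix.IsHermitian.dotProduct_mulVec_le_of_eigenvalues_le {ι : Type*} [Fintype ι]
    [DecidableEq ι] {A : Matrix ι ι ℝ} (hA : A.IsHermitian) {ρ : ℝ}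
    (h : ∀ i, hA.eigenvalues i ≤ ρ) (x : ι → ℝ) :
    x ⬝ᵥ A *ᵥ x ≤ ρ * (x ⬝ᵥ x) := by
  have hle : A ≤ algebraMap ℝ (Matrix ι ι ℝ) ρ := by
    rw [le_algebraMap_iff_spectrum_le hA.isSelfAdjoint, hA.spectrum_real_eq_range_eigenvalues]
    rintro _ ⟨i, rfl⟩
    exact h i
  have := (Matrix.le_iff.mp hle).dotProduct_mulVec_nonneg x
  rw [Algebra.algebraMap_eq_smul_one, sub_mulVec, dotProduct_sub, smul_mulVec, one_mulVec,
    dotProduct_smul, smul_eq_mul, star_trivial] at this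
  linarith

theorem sum_inner_sq_le_of_eigenvalues_le {ι κ : Type*} [Fintype ι] [Fintype κ] [DecidableEq κ]
    (X : ι → EuclideanSpace ℝ κ) {ρ : ℝ}
    (h : ∀ i, (isHermitian_conjTranspose_mul_self (Matrix.of fun j i => X j i)).eigenvalues i ≤ ρ)
    (d : EuclideanSpace ℝ κ) :
    ∑ j, ⟪X j, d⟫ ^ 2 ≤ ρ * ‖d‖ ^ 2 := by
  set M : Matrix ι κ ℝ := Matrix.of fun j i => X j i
  have hinner (j : ι) : ⟪X j, d⟫ = (M *ᵥ d) j := by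
    simp [M, EuclideanSpace.inner_eq_star_dotProduct, mulVec, dotProduct_comm]
  have hnorm : ‖d‖ ^ 2 = d ⬝ᵥ d := by
    rw [← real_inner_self_eq_norm_sq, EuclideanSpace.inner_eq_star_dotProduct, star_trivial]
  calc ∑ j, ⟪X j, d⟫ ^ 2 = d ⬝ᵥ (Mᴴ * M) *ᵥ d := by
        rw [← mulVec_mulVec, dotProduct_mulVec, conjTranspose_eq_transpose_of_trivial,
          vecMul_transpose]
        simp only [hinner, dotProduct, sq]
    _ ≤ ρ * ‖d‖ ^ 2 :=
        hnorm ▸ (isHermitian_conjTranspose_mul_self M).dotProduct_mulVec_le_of_eigenvalues_le h d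

section GLM

variable {n p : ℕ} (X : Fin n → EuclideanSpace ℝ (Fin p)) (y : Fin n → ℝ) (b : ℝ → ℝ)
  (v : EuclideanSpace ℝ (Fin p))

theorem inner_surrGrad (β d : EuclideanSpace ℝ (Fin p)) :
    ⟪d, surrGrad X y b v β⟫ = 1 / n * ∑ j, (deriv b ⟪X j, β⟫ - y j) * ⟪X j, d⟫ - ⟪d, v⟫ := by
  simp only [surrGrad, inner_sub_right, real_inner_smul_right, inner_sum, real_inner_comm d]

theorem glmLoss_le_of_deriv_deriv_le {μ : ℝ} (hb : ContDiff ℝ 2 b)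
    (hb'' : ∀ θ, deriv (deriv b) θ ≤ μ) (β γ : EuclideanSpace ℝ (Fin p)) :
    glmLoss X y b γ ≤ glmLoss X y b β +
      1 / n * ∑ j, ((deriv b ⟪X j, β⟫ - y j) * ⟪X j, γ - β⟫ + μ / 2 * ⟪X j, γ - β⟫ ^ 2) := by
  rw [glmLoss, glmLoss, ← mul_add, ← Finset.sum_add_distrib]
  gcongr with j
  have := le_add_deriv_mul_add_sq_of_deriv_deriv_le hb hb'' ⟪X j, β⟫ ⟪X j, γ - β⟫
  rw [inner_sub_right, add_sub_cancel] at this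
  rw [inner_sub_right]
  linarith

theorem quadApprox_self (ϑ : ℝ) (β : EuclideanSpace ℝ (Fin p)) :
    quadApprox X y b v ϑ β β = surrLoss X y b v β := by
  simp [quadApprox]

theorem surrLoss_le_quadApprox {μ ρ₁ ϑ : ℝ} (hb : ContDiff ℝ 2 b)
    (hb'' : ∀ θ, deriv (deriv b) θ ≤ μ) (hμ : 0 ≤ μ)
    (hρ₁ : ∀ i, (isHermitian_conjTranspose_mul_self
      (Matrix.of fun j i => X j i : Matrix (Fin n) (Fin p) ℝ)).eigenvalues i ≤ ρ₁)
    (hϑ : ρ₁ * μ / n ≤ ϑ) (γ β : EuclideanSpace ℝ (Fin p)) :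
    surrLoss X y b v γ ≤ quadApprox X y b v ϑ γ β := by
  have hglm := glmLoss_le_of_deriv_deriv_le X y b hb hb'' β γ
  have hsq := sum_inner_sq_le_of_eigenvalues_le X hρ₁ (γ - β)
  have hcurv : 1 / n * ∑ j, μ / 2 * ⟪X j, γ - β⟫ ^ 2 ≤ ϑ / 2 * ‖γ - β‖ ^ 2 :=
    calc 1 / n * ∑ j, μ / 2 * ⟪X j, γ - β⟫ ^ 2 = μ / (2 * n) * ∑ j, ⟪X j, γ - β⟫ ^ 2 := by
          rw [← Finset.mul_sum]; ring
      _ ≤ μ / (2 * n) * (ρ₁ * ‖γ - β‖ ^ 2) := by gcongr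
      _ = ρ₁ * μ / n / 2 * ‖γ - β‖ ^ 2 := by ring
      _ ≤ ϑ / 2 * ‖γ - β‖ ^ 2 := by gcongr
  rw [Finset.sum_add_distrib, mul_add] at hglm
  rw [quadApprox, inner_surrGrad, surrLoss, surrLoss, inner_sub_left]
  linarith

end GLM

theorem surrLoss_decrease_general
    {n p : ℕ}
    (X : Fin n → EuclideanSpace ℝ (Fin p)) (y : Fin n → ℝ)
    (b : ℝ → ℝ) (μ : ℝ) (hb : ContDiff ℝ 2 b)
    (hb'' : ∀ θ : ℝ, 0 ≤ deriv (deriv b) θ ∧ deriv (deriv b) θ ≤ μ)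
    (v : EuclideanSpace ℝ (Fin p))
    (ρ₁ : ℝ)
    (hρ₁ : IsGreatest
      (Set.range (Matrix.isHermitian_conjTranspose_mul_self
        (Matrix.of fun j i => X j i : Matrix (Fin n) (Fin p) ℝ)).eigenvalues) ρ₁)
    (ϑ : ℝ) (hϑ : ρ₁ * μ / n ≤ ϑ)
    (k : ℕ) (β βplus : EuclideanSpace ℝ (Fin p))
    (hβ : normZero β ≤ k)
    (hmin : ∀ γ : EuclideanSpace ℝ (Fin p), normZero γ ≤ k →
      quadApprox X y b v ϑ βplus β ≤ quadApprox X y b v ϑ γ β) :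
    surrLoss X y b v βplus ≤ surrLoss X y b v β :=
  calc surrLoss X y b v βplus
      ≤ quadApprox X y b v ϑ βplus β :=
        surrLoss_le_quadApprox X y b v hb (fun θ => (hb'' θ).2) ((hb'' 0).1.trans (hb'' 0).2)
          (fun i => hρ₁.2 ⟨i, rfl⟩) hϑ βplus β
    _ ≤ quadApprox X y b v ϑ β β := hmin β hβ
    _ = surrLoss X y b v β := quadApprox_self X y b v ϑ β

/-- Theorem 1 of the paper: one step of sparsity-restricted minimization of the
quadratic approximation does not increase the surrogate loss, provided `ϑ ≥ ρ₁ μ / n`. -/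
theorem surrLoss_decrease
    {n p : ℕ} (hn : 0 < n)
    (X : Fin n → EuclideanSpace ℝ (Fin p)) (y : Fin n → ℝ)
    (b : ℝ → ℝ) (μ : ℝ) (hμ : 0 < μ) (hb : ContDiff ℝ 2 b)
    (hb'' : ∀ θ : ℝ, 0 ≤ deriv (deriv b) θ ∧ deriv (deriv b) θ ≤ μ)
    (v : EuclideanSpace ℝ (Fin p))
    (ρ₁ : ℝ)
    (hρ₁ : IsGreatest
      (Set.range (Matrix.isHermitian_conjTranspose_mul_self
        (Matrix.of fun j i => X j i : Matrix (Fin n) (Fin p) ℝ)).eigenvalues) ρ₁)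
    (ϑ : ℝ) (hϑpos : 0 < ϑ) (hϑ : ρ₁ * μ / n ≤ ϑ)
    (k : ℕ) (β βplus : EuclideanSpace ℝ (Fin p))
    (hβ : normZero β ≤ k)
    (hβplus : normZero βplus ≤ k)
    (hmin : ∀ γ : EuclideanSpace ℝ (Fin p), normZero γ ≤ k →
      quadApprox X y b v ϑ βplus β ≤ quadApprox X y b v ϑ γ β) :
    surrLoss X y b v βplus ≤ surrLoss X y b v β :=
  surrLoss_decrease_general X y b μ hb hb'' v ρ₁ hρ₁ ϑ hϑ k β βplus hβ hmin
end
end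

section
/- (Lemma 1.) For each N, there exist (on possibly different probability spaces) independent real random variables Y_{N,1}, …, Y_{N,N} as described; suppose constants t_{N,1}, …, t_{N,N} satisfy ∑_{i=1}^N t_{N,i}² σ_{N,i}² = 1 and max_{1 ≤ i ≤ N} t_{N,i}² ≤ C/N for a constant C > 0, and let (d_N) be a sequence of positive reals with d_N/√N → 0. Then there exists N₀ such that for all N ≥ N₀, P(∑_{i=1}^N t_{N,i}(Y_{N,i} − μ_{N,i}) > d_N) ≤ exp(−d_N²/3). -/
/-!
Chernoff's bound at `s = 2 d / 3`. The moment generating function of `t (Y - b'(θ))` at `s` is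
`exp (b (θ + s t) - b θ - s t b'(θ))`, and `s t = O(d / √N) → 0` uniformly. Taylor's formula,
with `b''` uniformly continuous on a compact neighbourhood of `[a₁, a₂]`, bounds each exponent by
`(b''(θ) + ε) (s t)² / 2`; for `ε = 1 / (2C)` their sum is at most `(1 + 1/2) s² / 2`, because
`∑ t² b''(θ) = 1` and `∑ t² ≤ C`, and `-s d + 3 s² / 4 = -d² / 3`.
-/

open MeasureTheory Filter Real Set Metric ProbabilityTheory
open scoped ENNReal Topology

theorem ConvexOn.add_deriv_mul_sub_le {S : Set ℝ} {f : ℝ → ℝ} {x y : ℝ} (hf : ConvexOn ℝ S f)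
    (hx : x ∈ S) (hy : y ∈ S) (hfx : DifferentiableAt ℝ f x) :
    f x + deriv f x * (y - x) ≤ f y := by
  rcases lt_trichotomy x y with hxy | rfl | hyx
  · have := hf.deriv_le_slope hx hy hxy hfx
    rw [slope_def_field, le_div_iff₀ (sub_pos.2 hxy)] at this
    linarith
  · simp
  · have := hf.slope_le_deriv hy hx hyx hfx
    rw [slope_def_field, div_le_iff₀ (sub_pos.2 hyx)] at this
    linarith

theorem sub_sub_deriv_mul_le_of_deriv2_le {f : ℝ → ℝ} {U S : Set ℝ} (hU : IsOpen U)
    (hf : ContDiffOn ℝ 2 f U) (hS : Convex ℝ S) (hSU : S ⊆ U) {M : ℝ}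
    (hM : ∀ z ∈ S, deriv (deriv f) z ≤ M) {x y : ℝ} (hx : x ∈ S) (hy : y ∈ S) :
    f y - f x - deriv f x * (y - x) ≤ M * (y - x) ^ 2 / 2 := by
  have hf' : DifferentiableOn ℝ f U := hf.differentiableOn (by norm_num)
  have hf'' : DifferentiableOn ℝ (deriv f) U :=
    (hf.deriv_of_isOpen hU (m := 1) (by norm_num)).differentiableOn (by norm_num)
  -- `g` is convex on `S`, so it lies above its tangent line at `x`.
  set g : ℝ → ℝ := fun z => M * z ^ 2 / 2 - f z
  have hg : ∀ z ∈ U, HasDerivAt g (M * z - deriv f z) z := fun z hz => by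
    refine (((hasDerivAt_pow 2 z).const_mul M).div_const 2 |>.fun_sub
      (hf'.differentiableAt (hU.mem_nhds hz)).hasDerivAt).congr_deriv ?_
    push_cast
    ring
  have hg' : ∀ z ∈ U, HasDerivAt (deriv g) (M - deriv (deriv f) z) z := fun z hz => by
    have hderiv : deriv g =ᶠ[𝓝 z] fun w => M * w - deriv f w :=
      eventually_of_mem (hU.mem_nhds hz) fun w hw => (hg w hw).deriv
    refine HasDerivAt.congr_of_eventuallyEq ?_ hderiv
    exact (hasDerivAt_const_mul M).fun_sub (hf''.differentiableAt (hU.mem_nhds hz)).hasDerivAt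
  have hconvex : ConvexOn ℝ S g := by
    refine convexOn_of_deriv2_nonneg hS
      (fun z hz => (hg z (hSU hz)).continuousAt.continuousWithinAt)
      (fun z hz => (hg z (hSU (interior_subset hz))).differentiableAt.differentiableWithinAt)
      (fun z hz => (hg' z (hSU (interior_subset hz))).differentiableAt.differentiableWithinAt)
      fun z hz => ?_
    rw [Function.iterate_succ_apply, Function.iterate_one, (hg' z (hSU (interior_subset hz))).deriv]
    linarith [hM z (interior_subset hz)]
  have := hconvex.add_deriv_mul_sub_le hx hy (hg x (hSU hx)).differentiableAt
  rw [(hg x (hSU hx)).deriv] at this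
  simp only [g] at this
  nlinarith

theorem IsCompact.exists_pos_forall_add_sub_sub_deriv_mul_le {f : ℝ → ℝ} {K U : Set ℝ}
    (hK : IsCompact K) (hU : IsOpen U) (hKU : K ⊆ U) (hf : ContDiffOn ℝ 2 f U) {ε : ℝ}
    (hε : 0 < ε) : ∃ η > 0, ∀ x ∈ K, ∀ h, |h| ≤ η →
      x + h ∈ U ∧ f (x + h) - f x - deriv f x * h ≤ (deriv (deriv f) x + ε) * h ^ 2 / 2 := by
  obtain ⟨δ, hδ, hδU⟩ := hK.exists_cthickening_subset_open hU hKU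
  have hcont : ContinuousOn (deriv (deriv f)) U :=
    (hf.deriv_of_isOpen hU (m := 1) (by norm_num)).continuousOn_deriv_of_isOpen hU le_rfl
  obtain ⟨δ₁, hδ₁, hunif⟩ := Metric.uniformContinuousOn_iff.1
    ((hK.cthickening).uniformContinuousOn_of_continuous (hcont.mono hδU)) ε hε
  refine ⟨min δ (δ₁ / 2), by positivity, fun x hx h hh => ?_⟩
  have hball : closedBall x (min δ (δ₁ / 2)) ⊆ cthickening δ K :=
    (closedBall_subset_cthickening hx _).trans (cthickening_mono (min_le_left _ _) K)
  have hxh : x + h ∈ closedBall x (min δ (δ₁ / 2)) := by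
    rwa [mem_closedBall, dist_self_add_left, Real.norm_eq_abs]
  have hM : ∀ z ∈ closedBall x (min δ (δ₁ / 2)), deriv (deriv f) z ≤ deriv (deriv f) x + ε :=
    fun z hz => by
      have := hunif z (hball hz) x (self_subset_cthickening K hx)
        ((mem_closedBall.1 hz).trans_lt (by linarith [min_le_right δ (δ₁ / 2)]))
      linarith [(abs_lt.1 (Real.dist_eq _ _ ▸ this)).2]
  have := sub_sub_deriv_mul_le_of_deriv2_le hU hf (convex_closedBall _ _) (hball.trans hδU) hM
    (mem_closedBall_self (by positivity)) hxh
  rw [add_sub_cancel_left] at this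
  exact ⟨hδU (hball hxh), this⟩

/-- A probability measure only when `b θ = log ∫ exp (θ y + c y) ∂ν`. -/
noncomputable def expFamily (ν : Measure ℝ) (c b : ℝ → ℝ) (θ : ℝ) : Measure ℝ :=
  ν.withDensity fun y => ENNReal.ofReal (exp (θ * y - b θ + c y))

section ExpFamily

variable {ν : Measure ℝ} {c b : ℝ → ℝ} {θ s : ℝ}

theorem expFamily_eq_withDensity_toNNReal (ν : Measure ℝ) (c b : ℝ → ℝ) (θ : ℝ) :
    expFamily ν c b θ = ν.withDensity fun y => ((exp (θ * y - b θ + c y)).toNNReal : ℝ≥0∞) :=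
  rfl

theorem expFamily_density_smul_exp_mul (θ s y : ℝ) :
    (exp (θ * y - b θ + c y)).toNNReal • exp (s * y) = exp (-b θ) * exp ((θ + s) * y + c y) := by
  rw [NNReal.smul_def, smul_eq_mul, Real.coe_toNNReal _ (exp_nonneg _), ← exp_add, ← exp_add]
  ring_nf

theorem integrable_exp_mul_expFamily (hc : Measurable c)
    (hZ : Integrable (fun y => exp ((θ + s) * y + c y)) ν) :
    Integrable (fun y => exp (s * y)) (expFamily ν c b θ) := by
  rw [expFamily_eq_withDensity_toNNReal, integrable_withDensity_iff_integrable_smul (by fun_prop)]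
  simpa only [expFamily_density_smul_exp_mul] using hZ.const_mul (exp (-b θ))

theorem integral_exp_mul_expFamily (hc : Measurable c) (θ s : ℝ) :
    ∫ y, exp (s * y) ∂expFamily ν c b θ = exp (-b θ) * ∫ y, exp ((θ + s) * y + c y) ∂ν := by
  rw [expFamily_eq_withDensity_toNNReal, integral_withDensity_eq_integral_smul (by fun_prop)]
  simp only [expFamily_density_smul_exp_mul, integral_const_mul]

variable {Ω : Type*} [MeasurableSpace Ω] {P : Measure Ω} {Y : Ω → ℝ}

theorem integrable_exp_mul_of_map_eq_expFamily (hc : Measurable c) (hY : Measurable Y)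
    (hlaw : P.map Y = expFamily ν c b θ) (hZ : Integrable (fun y => exp ((θ + s) * y + c y)) ν) :
    Integrable (fun ω => exp (s * Y ω)) P :=
  (integrable_map_measure (g := fun y => exp (s * y)) (by fun_prop) hY.aemeasurable).1
    (hlaw ▸ integrable_exp_mul_expFamily hc hZ)

theorem mgf_of_map_eq_expFamily [IsProbabilityMeasure P] (hc : Measurable c) (hY : Measurable Y)
    (hlaw : P.map Y = expFamily ν c b θ) (hZ : Integrable (fun y => exp ((θ + s) * y + c y)) ν)
    (hb : b (θ + s) = log (∫ y, exp ((θ + s) * y + c y) ∂ν)) :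
    mgf Y P s = exp (b (θ + s) - b θ) := by
  have : NeZero ν := ⟨by
    rintro rfl
    have := Measure.isProbabilityMeasure_map (μ := P) hY.aemeasurable
    exact IsProbabilityMeasure.ne_zero _ (hlaw.trans (withDensity_zero_left _))⟩
  rw [← mgf_id_map hY.aemeasurable, hlaw, mgf]
  simp only [id]
  rw [integral_exp_mul_expFamily hc, ← exp_log (integral_exp_pos hZ), ← hb, ← exp_add]
  ring_nf

theorem mgf_mul_sub_of_map_eq_expFamily [IsProbabilityMeasure P] (hc : Measurable c)
    (hY : Measurable Y) (hlaw : P.map Y = expFamily ν c b θ) {t m : ℝ}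
    (hZ : Integrable (fun y => exp ((θ + s * t) * y + c y)) ν)
    (hb : b (θ + s * t) = log (∫ y, exp ((θ + s * t) * y + c y) ∂ν)) :
    mgf (fun ω => t * (Y ω - m)) P s = exp (b (θ + s * t) - b θ - m * (s * t)) := by
  simp only [mgf_const_mul, sub_eq_add_neg, mgf_add_const]
  rw [mul_comm t s, ← sub_eq_add_neg, mgf_of_map_eq_expFamily hc hY hlaw hZ hb, ← exp_add]
  ring_nf

end ExpFamily

theorem ProbabilityTheory.iIndepFun.measureReal_sum_ge_le {Ω ι : Type*} [MeasurableSpace Ω]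
    [Fintype ι] {μ : Measure Ω} [IsFiniteMeasure μ] {X : ι → Ω → ℝ} (h : iIndepFun X μ)
    (hX : ∀ i, Measurable (X i)) {s : ℝ} (hs : 0 ≤ s)
    (hint : ∀ i, Integrable (fun ω => exp (s * X i ω)) μ) (d : ℝ) :
    μ.real {ω | d ≤ ∑ i, X i ω} ≤ exp (-s * d) * ∏ i, mgf (X i) μ s := by
  simpa only [h.mgf_sum hX, Finset.sum_apply] using
    measure_ge_le_exp_mul_mgf d hs (h.integrable_exp_mul_sum hX fun i _ => hint i)

theorem measureReal_sum_mul_sub_ge_le_of_map_eq_expFamily {Ω ι : Type*} [MeasurableSpace Ω]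
    [Fintype ι] {P : Measure Ω} [IsProbabilityMeasure P] {ν : Measure ℝ} {c b : ℝ → ℝ}
    (hc : Measurable c) {Y : ι → Ω → ℝ} (hY : ∀ i, Measurable (Y i)) (hindep : iIndepFun Y P)
    {θ : ι → ℝ} (hlaw : ∀ i, P.map (Y i) = expFamily ν c b (θ i)) {t m : ι → ℝ} {s : ℝ}
    (hs : 0 ≤ s) (hZ : ∀ i, Integrable (fun y => exp ((θ i + s * t i) * y + c y)) ν)
    (hb : ∀ i, b (θ i + s * t i) = log (∫ y, exp ((θ i + s * t i) * y + c y) ∂ν)) (d : ℝ) :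
    P.real {ω | d ≤ ∑ i, t i * (Y i ω - m i)} ≤
      exp (-s * d + ∑ i, (b (θ i + s * t i) - b (θ i) - m i * (s * t i))) := by
  have hX : iIndepFun (fun i ω => t i * (Y i ω - m i)) P :=
    hindep.comp (fun i y => t i * (y - m i)) fun i => by fun_prop
  refine (hX.measureReal_sum_ge_le (fun i => by fun_prop) hs (fun i => ?_) d).trans_eq ?_
  · refine ((integrable_exp_mul_of_map_eq_expFamily hc (hY i) (hlaw i) (hZ i)).const_mul
      (exp (-(m i * (s * t i))))).congr (ae_of_all _ fun ω => ?_)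
    simp only [← exp_add]
    ring_nf
  · rw [exp_add, exp_sum]
    exact congrArg _ (Finset.prod_congr rfl fun i _ =>
      mgf_mul_sub_of_map_eq_expFamily hc (hY i) (hlaw i) (hZ i) (hb i))

theorem sum_sq_le_of_forall_sq_le {N : ℕ} {t : Fin N → ℝ} {C : ℝ} (hC : 0 ≤ C)
    (ht : ∀ i, t i ^ 2 ≤ C / N) : ∑ i, t i ^ 2 ≤ C := by
  calc ∑ i, t i ^ 2 ≤ ∑ _i : Fin N, C / N := Finset.sum_le_sum fun i _ => ht i
    _ ≤ C := by
      rw [Finset.sum_const, Finset.card_univ, Fintype.card_fin, nsmul_eq_mul]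
      rcases Nat.eq_zero_or_pos N with rfl | hN
      · simpa using hC
      · rw [mul_div_cancel₀ _ (by positivity)]

theorem abs_mul_le_of_sq_le_div {s x C N : ℝ} (hs : 0 ≤ s) (hC : 0 ≤ C) (hx : x ^ 2 ≤ C / N) :
    |s * x| ≤ √C * (s / √N) := by
  rw [abs_mul, abs_of_nonneg hs, mul_div_left_comm, ← sqrt_div hC]
  exact mul_le_mul_of_nonneg_left (abs_le_sqrt hx) hs

theorem sum_le_of_le_mul_sq {ι : Type*} [Fintype ι] {K w t : ι → ℝ} {s ε C : ℝ}
    (hK : ∀ i, K i ≤ (w i + ε) * (s * t i) ^ 2 / 2) (hw : ∑ i, t i ^ 2 * w i = 1)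
    (ht : ∑ i, t i ^ 2 ≤ C) (hε : 0 ≤ ε) :
    ∑ i, K i ≤ s ^ 2 / 2 * (1 + ε * C) :=
  calc ∑ i, K i ≤ ∑ i, (w i + ε) * (s * t i) ^ 2 / 2 := Finset.sum_le_sum fun i _ => hK i
    _ = s ^ 2 / 2 * (∑ i, t i ^ 2 * w i + ε * ∑ i, t i ^ 2) := by
      rw [Finset.mul_sum, ← Finset.sum_add_distrib, Finset.mul_sum]
      exact Finset.sum_congr rfl fun i _ => by ring
    _ ≤ s ^ 2 / 2 * (1 + ε * C) := by
      rw [hw]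
      gcongr

theorem exponential_family_weighted_sum_tail_bound_general
    (ν : Measure ℝ) (c : ℝ → ℝ) (hc : Measurable c)
    (a₁ a₂ u₁ u₂ : ℝ) (hΘ : Set.Icc a₁ a₂ ⊆ Set.Ioo u₁ u₂)
    (b : ℝ → ℝ) (hb : ContDiffOn ℝ 2 b (Set.Ioo u₁ u₂))
    (hZfin : ∀ θ ∈ Set.Ioo u₁ u₂, Integrable (fun y => Real.exp (θ * y + c y)) ν)
    (hblog : ∀ θ ∈ Set.Ioo u₁ u₂, b θ = Real.log (∫ y, Real.exp (θ * y + c y) ∂ν))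
    (Ω : ℕ → Type*) [∀ N, MeasurableSpace (Ω N)]
    (P : ∀ N, Measure (Ω N)) [∀ N, IsProbabilityMeasure (P N)]
    (Y : ∀ N : ℕ, Fin N → Ω N → ℝ)
    (hYmeas : ∀ N (i : Fin N), Measurable (Y N i))
    (hYindep : ∀ N : ℕ,
      ProbabilityTheory.iIndepFun
        (Y N) (P N))
    (θp : ∀ N : ℕ, Fin N → ℝ)
    (hθp : ∀ N (i : Fin N), θp N i ∈ Set.Icc a₁ a₂)
    (hYlaw : ∀ N (i : Fin N), (P N).map (Y N i) =
      ν.withDensity (fun y => ENNReal.ofReal (Real.exp (θp N i * y - b (θp N i) + c y))))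
    (t : ∀ N : ℕ, Fin N → ℝ)
    (ht1 : ∀ N : ℕ, 1 ≤ N → ∑ i, (t N i) ^ 2 * deriv (deriv b) (θp N i) = 1)
    (C : ℝ) (hC : 0 < C)
    (htmax : ∀ N : ℕ, 1 ≤ N → ∀ i : Fin N, (t N i) ^ 2 ≤ C / N)
    (d : ℕ → ℝ) (hd : ∀ N, 0 < d N)
    (hdo : Tendsto (fun N : ℕ => d N / Real.sqrt N) atTop (𝓝 0)) :
    ∃ N₀ : ℕ, ∀ N ≥ N₀,
      (P N) {ω | d N < ∑ i, t N i * (Y N i ω - deriv b (θp N i))} ≤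
        ENNReal.ofReal (Real.exp (-(d N) ^ 2 / 3)) := by
  obtain ⟨η, hη, htaylor⟩ := isCompact_Icc.exists_pos_forall_add_sub_sub_deriv_mul_le isOpen_Ioo
    hΘ hb (show 0 < 1 / (2 * C) by positivity)
  obtain ⟨N₀, hN₀⟩ := eventually_atTop.1 <| (eventually_ge_atTop 1).and <|
    (hdo.const_mul (2 / 3 * √C)).eventually (ge_mem_nhds (by rw [mul_zero]; exact hη))
  refine ⟨N₀, fun N hN => ?_⟩
  obtain ⟨hN1, hdN⟩ := hN₀ N hN
  -- `s` minimises the exponent `-s d + 3 s² / 4` of the Chernoff bound obtained below.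
  set s := 2 / 3 * d N with hs
  have hs0 : 0 < s := mul_pos (by norm_num) (hd N)
  have hstep : ∀ i, |s * t N i| ≤ η := fun i => by
    refine (abs_mul_le_of_sq_le_div hs0.le hC.le (htmax N hN1 i)).trans (le_of_eq_of_le ?_ hdN)
    ring
  have hmem : ∀ i, θp N i + s * t N i ∈ Ioo u₁ u₂ := fun i => (htaylor _ (hθp N i) _ (hstep i)).1
  have hcgf := sum_le_of_le_mul_sq (fun i => (htaylor _ (hθp N i) _ (hstep i)).2) (ht1 N hN1)
    (sum_sq_le_of_forall_sq_le hC.le (htmax N hN1)) (by positivity)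
  have hchernoff := measureReal_sum_mul_sub_ge_le_of_map_eq_expFamily hc (hYmeas N) (hYindep N)
    (hYlaw N) (m := fun i => deriv b (θp N i)) hs0.le (fun i => hZfin _ (hmem i))
    (fun i => hblog _ (hmem i)) (d N)
  refine (measure_mono (ofPred_subset_ofPred.2 fun _ => le_of_lt)).trans ?_
  rw [← ofReal_measureReal (measure_ne_top _ _)]
  refine ENNReal.ofReal_le_ofReal (hchernoff.trans (exp_le_exp.2 ?_))
  rw [show 1 / (2 * C) * C = 1 / 2 by field_simp] at hcgf
  rw [hs] at hcgf ⊢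
  linear_combination hcgf

/-- Lemma 1 of the paper: a Chernoff-type bound for weighted sums of independent
exponential-family random variables.  Here `ν` is a σ-finite base measure, `b` is the
log-partition function on an open interval `Ioo u₁ u₂` containing the compact parameter
interval `Icc a₁ a₂`; `Y N i` has natural parameter `θp N i`, mean `b'(θp N i)` and
variance `b''(θp N i)`. -/
theorem exponential_family_weighted_sum_tail_bound
    (ν : Measure ℝ) [SigmaFinite ν] (c : ℝ → ℝ) (hc : Measurable c)
    (a₁ a₂ u₁ u₂ : ℝ) (ha : a₁ ≤ a₂) (hΘ : Set.Icc a₁ a₂ ⊆ Set.Ioo u₁ u₂)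
    (b : ℝ → ℝ) (hb : ContDiffOn ℝ 2 b (Set.Ioo u₁ u₂))
    (hZfin : ∀ θ ∈ Set.Ioo u₁ u₂, Integrable (fun y => Real.exp (θ * y + c y)) ν)
    (hblog : ∀ θ ∈ Set.Ioo u₁ u₂, b θ = Real.log (∫ y, Real.exp (θ * y + c y) ∂ν))
    (Ω : ℕ → Type*) [∀ N, MeasurableSpace (Ω N)]
    (P : ∀ N, Measure (Ω N)) [∀ N, IsProbabilityMeasure (P N)]
    (Y : ∀ N : ℕ, Fin N → Ω N → ℝ)
    (hYmeas : ∀ N (i : Fin N), Measurable (Y N i))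
    (hYindep : ∀ N : ℕ,
      ProbabilityTheory.iIndepFun
        (Y N) (P N))
    (θp : ∀ N : ℕ, Fin N → ℝ)
    (hθp : ∀ N (i : Fin N), θp N i ∈ Set.Icc a₁ a₂)
    (hYlaw : ∀ N (i : Fin N), (P N).map (Y N i) =
      ν.withDensity (fun y => ENNReal.ofReal (Real.exp (θp N i * y - b (θp N i) + c y))))
    (t : ∀ N : ℕ, Fin N → ℝ)
    (ht1 : ∀ N : ℕ, 1 ≤ N → ∑ i, (t N i) ^ 2 * deriv (deriv b) (θp N i) = 1)
    (C : ℝ) (hC : 0 < C)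
    (htmax : ∀ N : ℕ, 1 ≤ N → ∀ i : Fin N, (t N i) ^ 2 ≤ C / N)
    (d : ℕ → ℝ) (hd : ∀ N, 0 < d N)
    (hdo : Tendsto (fun N : ℕ => d N / Real.sqrt N) atTop (𝓝 0)) :
    ∃ N₀ : ℕ, ∀ N ≥ N₀,
      (P N) {ω | d N < ∑ i, t N i * (Y N i ω - deriv b (θp N i))} ≤
        ENNReal.ofReal (Real.exp (-(d N) ^ 2 / 3)) :=
  exponential_family_weighted_sum_tail_bound_general ν c hc a₁ a₂ u₁ u₂ hΘ b hb hZfin hblog Ω P Y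
    hYmeas hYindep θp hθp hYlaw t ht1 C hC htmax d hd hdo
end

section
/- (Cone condition for the Lasso error, from the proof of Lemma 2.) Let L : ℝ^p → ℝ be convex and differentiable, let β* ∈ ℝ^p with support S* = {j : β*_j ≠ 0}, let λ > 0, and let β̃ be a global minimizer of β ↦ L(β) + λ‖β‖₁. If ‖∇L(β*)‖_∞ ≤ λ/2, then the error w = β̃ − β* satisfies ∑_{j ∉ S*} |w_j| ≤ 3 ∑_{j ∈ S*} |w_j|. -/
open scoped Classical

/-! Testing the gradient of `L` at `β*` against the error `w` bounds `L β̃ - L β*` below by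
`-(λ/2)‖w‖₁`; optimality of `β̃` bounds it above by `λ (‖β*‖₁ - ‖β̃‖₁)`, and off the support
`S*` this difference of ℓ₁ norms loses exactly `|w_j|`, while on `S*` it gains at most `|w_j|`.
Comparing the two bounds gives `(λ/2) ‖w_{S*ᶜ}‖₁ ≤ (3λ/2) ‖w_{S*}‖₁`. -/

open Finset

theorem ConvexOn.apply_sub_le_of_hasFDerivAt {E : Type*} [NormedAddCommGroup E]
    [NormedSpace ℝ E] {s : Set E} {f : E → ℝ} {f' : E →L[ℝ] ℝ} {x y : E}
    (hf : ConvexOn ℝ s f) (hx : x ∈ s) (hy : y ∈ s) (hf' : HasFDerivAt f f' x) :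
    f' (y - x) ≤ f y - f x := by
  set g : ℝ →ᵃ[ℝ] E := AffineMap.lineMap x y
  have hg0 : g 0 = x := AffineMap.lineMap_apply_zero x y
  have hg1 : g 1 = y := AffineMap.lineMap_apply_one x y
  have hline : ConvexOn ℝ (g ⁻¹' s) (f ∘ g) := hf.comp_affineMap g
  have hderiv : HasDerivAt (f ∘ g) (f' (y - x)) 0 := by
    refine HasFDerivAt.comp_hasDerivAt (0 : ℝ) ?_ AffineMap.hasDerivAt_lineMap
    rwa [hg0]
  have := hline.le_slope_of_hasDerivAt (x := 0) (y := 1) (by simpa [hg0]) (by simpa [hg1])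
    zero_lt_one hderiv
  simpa [slope_def_field, hg0, hg1] using this

theorem EuclideanSpace.abs_apply_le_mul_sum_abs {ι : Type*} [Fintype ι] [DecidableEq ι]
    (φ : EuclideanSpace ℝ ι →L[ℝ] ℝ) {c : ℝ} (hφ : ∀ j, |φ (EuclideanSpace.single j 1)| ≤ c)
    (w : EuclideanSpace ℝ ι) : |φ w| ≤ c * ∑ j, |w j| := by
  have hexpand : φ w = ∑ j, w j * φ (EuclideanSpace.single j 1) := by
    conv_lhs => rw [← (EuclideanSpace.basisFun ι ℝ).sum_repr w]
    simp [map_sum, EuclideanSpace.basisFun_apply]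
  calc |φ w| ≤ ∑ j, |w j| * |φ (EuclideanSpace.single j 1)| := by
        rw [hexpand]
        simpa only [abs_mul] using abs_sum_le_sum_abs (fun j => w j * φ (EuclideanSpace.single j 1)) univ
    _ ≤ ∑ j, |w j| * c := by gcongr with j; exact hφ j
    _ = c * ∑ j, |w j| := by rw [mul_sum]; simp only [mul_comm]

theorem sum_abs_sub_sum_abs_le {ι : Type*} [Fintype ι] (a b : ι → ℝ) :
    ∑ j, |a j| - ∑ j, |b j| ≤
      ∑ j ∈ univ.filter (fun j => a j ≠ 0), |(b - a) j| -
        ∑ j ∈ univ.filter (fun j => a j = 0), |(b - a) j| := by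
  rw [← sum_sub_distrib, ← sum_filter_add_sum_filter_not univ (fun j => a j = 0), sub_eq_neg_add,
    ← sum_neg_distrib]
  refine add_le_add (le_of_eq (sum_congr rfl fun j hj => ?_)) (sum_le_sum fun j _ => ?_)
  · simp [(mem_filter.mp hj).2]
  · simpa [abs_sub_comm] using abs_sub_abs_le_abs_sub (a j) (b j)

/-- Cone condition for the Lasso error (from the proof of Lemma 2): if
`‖∇L(β*)‖_∞ ≤ λ/2` and `β̃` globally minimizes `L(β) + λ‖β‖₁`, then the error
`w = β̃ − β*` satisfies `∑_{j ∉ S*} |wⱼ| ≤ 3 ∑_{j ∈ S*} |wⱼ|`, where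
`S* = {j : β*ⱼ ≠ 0}`. -/
theorem lasso_cone_condition
    {p : ℕ} (L : EuclideanSpace ℝ (Fin p) → ℝ)
    (hconv : ConvexOn ℝ Set.univ L) (hdiff : Differentiable ℝ L)
    (βs : EuclideanSpace ℝ (Fin p)) (lam : ℝ) (hlam : 0 < lam)
    (βt : EuclideanSpace ℝ (Fin p))
    (hmin : ∀ β : EuclideanSpace ℝ (Fin p),
      L βt + lam * ∑ j, |βt j| ≤ L β + lam * ∑ j, |β j|)
    (hgrad : ∀ j : Fin p, |fderiv ℝ L βs (EuclideanSpace.single j 1)| ≤ lam / 2) :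
    ∑ j ∈ Finset.univ.filter (fun j => βs j = 0), |(βt - βs) j| ≤
      3 * ∑ j ∈ Finset.univ.filter (fun j => βs j ≠ 0), |(βt - βs) j| := by
  set A := ∑ j ∈ univ.filter (fun j => βs j = 0), |(βt - βs) j|
  set B := ∑ j ∈ univ.filter (fun j => βs j ≠ 0), |(βt - βs) j|
  have htangent := hconv.apply_sub_le_of_hasFDerivAt (Set.mem_univ βs) (Set.mem_univ βt)
    (hdiff βs).hasFDerivAt
  have hgradient := EuclideanSpace.abs_apply_le_mul_sum_abs _ hgrad (βt - βs)
  have hnorm : ∑ j, |(βt - βs) j| = A + B := (sum_filter_add_sum_filter_not _ _ _).symm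
  have hl1 : ∑ j, |βs j| - ∑ j, |βt j| ≤ B - A := by
    simpa [A, B] using sum_abs_sub_sum_abs_le βs.ofLp βt.ofLp
  have hcompare : -(lam / 2) * (A + B) ≤ lam * (B - A) :=
    calc -(lam / 2) * (A + B) ≤ fderiv ℝ L βs (βt - βs) := by
          rw [← hnorm]; linarith [neg_abs_le (fderiv ℝ L βs (βt - βs))]
      _ ≤ L βt - L βs := htangent
      _ ≤ lam * (∑ j, |βs j| - ∑ j, |βt j|) := by linarith [hmin βs]
      _ ≤ lam * (B - A) := by gcongr
  exact (mul_le_mul_iff_of_pos_left hlam).mp (by linarith : lam * A ≤ lam * (3 * B))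
end

section
/- (ℓ∞ gradient bound for sparse differences, inequality (A.16) of the paper.) Suppose in addition that every entry of the design matrix satisfies |x_{i,l}| ≤ c₂ for a constant c₂ > 0. If β₁, β₂ ∈ ℝ^p are such that β₁ − β₂ has at most s nonzero coordinates, then ‖∇L(β₁) − ∇L(β₂)‖_∞ ≤ μ c₂² s ‖β₁ − β₂‖_∞. -/
/-! `b'` is `μ`-Lipschitz because `0 ≤ b'' ≤ μ`. The predictor `Xᵢᵀβ` sees only the `s`
coordinates where `β₁` and `β₂` differ, so it moves by at most `c₂ s ‖β₁ - β₂‖_∞`; multiplying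
by `|x_{i,l}| ≤ c₂` and averaging over `i` gives the bound. -/

open scoped BigOperators

noncomputable section

/-- Gradient of the GLM negative log-likelihood, written coordinatewise:
`(∇L(β))ₗ = (1/N) ∑ᵢ (b'(Xᵢᵀβ) − yᵢ) x_{i,l}`.  Here `Fin p → ℝ` carries the
sup-norm. -/
def glmGradPi {N p : ℕ} (X : Fin N → Fin p → ℝ) (y : Fin N → ℝ)
    (b : ℝ → ℝ) (β : Fin p → ℝ) : Fin p → ℝ :=
  fun l => (1 / (N : ℝ)) * ∑ i, (deriv b (∑ l', X i l' * β l') - y i) * X i l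

theorem abs_sum_mul_le_of_abs_le {ι : Type*} [Fintype ι] {c : ℝ} (x v : ι → ℝ)
    (hx : ∀ l, |x l| ≤ c) :
    |∑ l, x l * v l| ≤ c * (Function.support v).ncard * ‖v‖ := by
  classical
  have hv : ∀ l, |v l| ≤ ‖v‖ := fun l => by simpa using norm_le_pi_norm v l
  calc |∑ l, x l * v l| ≤ ∑ l, |x l * v l| := Finset.abs_sum_le_sum_abs _ _
    _ = ∑ l with v l ≠ 0, |x l * v l| :=
        (Finset.sum_filter_of_ne fun l _ h => right_ne_zero_of_mul (abs_ne_zero.mp h)).symm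
    _ ≤ ∑ l with v l ≠ 0, c * ‖v‖ := Finset.sum_le_sum fun l _ => by
        rw [abs_mul]
        exact (mul_le_mul_of_nonneg_left (hv l) (abs_nonneg _)).trans
          (mul_le_mul_of_nonneg_right (hx l) (norm_nonneg v))
    _ = c * (Function.support v).ncard * ‖v‖ := by
        rw [Finset.sum_const, nsmul_eq_mul, Set.ncard_eq_toFinset_card',
          Function.support, Set.toFinset_ofPred]
        ring

theorem abs_one_div_mul_sum_le {N : ℕ} {B : ℝ} (f : Fin N → ℝ) (hB : 0 ≤ B)
    (hf : ∀ i, |f i| ≤ B) :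
    |1 / (N : ℝ) * ∑ i, f i| ≤ B := by
  rcases N.eq_zero_or_pos with rfl | hN
  · simpa using hB
  calc |1 / (N : ℝ) * ∑ i, f i| ≤ 1 / (N : ℝ) * ∑ i, |f i| := by
        rw [abs_mul, abs_of_nonneg (by positivity)]
        gcongr
        exact Finset.abs_sum_le_sum_abs _ _
    _ ≤ 1 / (N : ℝ) * (N * B) := by
        gcongr
        simpa using Finset.sum_le_card_nsmul Finset.univ _ _ fun i _ => hf i
    _ = B := by field_simp

theorem abs_deriv_sub_le_of_abs_deriv_deriv_le {b : ℝ → ℝ} {μ : ℝ} (hb : ContDiff ℝ 2 b)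
    (hb'' : ∀ θ, |deriv (deriv b) θ| ≤ μ) (a a' : ℝ) :
    |deriv b a - deriv b a'| ≤ μ * |a - a'| := by
  have hdiff : Differentiable ℝ (deriv b) :=
    (hb.iterate_deriv' 1 1).differentiable one_ne_zero
  simpa using Convex.norm_image_sub_le_of_norm_deriv_le (s := Set.univ)
    (fun x _ => hdiff x) (fun x _ => hb'' x) convex_univ trivial trivial

theorem glmGradPi_sub_apply {N p : ℕ} (X : Fin N → Fin p → ℝ) (y : Fin N → ℝ) (b : ℝ → ℝ)
    (β₁ β₂ : Fin p → ℝ) (l : Fin p) :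
    (glmGradPi X y b β₁ - glmGradPi X y b β₂) l = 1 / (N : ℝ) *
      ∑ i, (deriv b (∑ l', X i l' * β₁ l') - deriv b (∑ l', X i l' * β₂ l')) * X i l := by
  simp only [Pi.sub_apply, glmGradPi, ← mul_sub, ← Finset.sum_sub_distrib]
  congr 1
  exact Finset.sum_congr rfl fun i _ => by ring

theorem glm_grad_sparse_sup_bound_general
    {N p : ℕ}
    (X : Fin N → Fin p → ℝ) (y : Fin N → ℝ)
    (b : ℝ → ℝ) (μ : ℝ) (hb : ContDiff ℝ 2 b)
    (hb'' : ∀ θ : ℝ, 0 ≤ deriv (deriv b) θ ∧ deriv (deriv b) θ ≤ μ)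
    (c₂ : ℝ) (hX : ∀ i l, |X i l| ≤ c₂)
    (s : ℕ) (β₁ β₂ : Fin p → ℝ)
    (hsparse : {j | β₁ j ≠ β₂ j}.ncard ≤ s) :
    ‖glmGradPi X y b β₁ - glmGradPi X y b β₂‖ ≤ μ * c₂ ^ 2 * s * ‖β₁ - β₂‖ := by
  have hμ : 0 ≤ μ := (hb'' 0).1.trans (hb'' 0).2
  have hlip := abs_deriv_sub_le_of_abs_deriv_deriv_le hb fun θ =>
    abs_le.mpr ⟨by linarith [(hb'' θ).1], (hb'' θ).2⟩
  have hsupport : Function.support (β₁ - β₂) = {j | β₁ j ≠ β₂ j} := by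
    ext j
    simp [sub_eq_zero]
  rw [pi_norm_le_iff_of_nonneg (by positivity)]
  intro l
  rw [Real.norm_eq_abs, glmGradPi_sub_apply]
  refine abs_one_div_mul_sum_le _ (by positivity) fun i => ?_
  have hc₂ : 0 ≤ c₂ := (abs_nonneg _).trans (hX i l)
  have hpredictor : |∑ l, X i l * β₁ l - ∑ l, X i l * β₂ l| ≤ c₂ * s * ‖β₁ - β₂‖ := by
    rw [← Finset.sum_sub_distrib]
    simp_rw [← mul_sub]
    refine (abs_sum_mul_le_of_abs_le (X i) (β₁ - β₂) (hX i)).trans ?_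
    rw [hsupport]
    gcongr
  calc _ = |deriv b (∑ l', X i l' * β₁ l') - deriv b (∑ l', X i l' * β₂ l')| * |X i l| :=
        abs_mul _ _
    _ ≤ μ * (c₂ * s * ‖β₁ - β₂‖) * c₂ := by
        gcongr
        exacts [(hlip _ _).trans (by gcongr), hX i l]
    _ = μ * c₂ ^ 2 * s * ‖β₁ - β₂‖ := by ring

/-- ℓ∞ gradient bound for sparse differences (inequality (A.16) of the paper):
if all design entries satisfy `|x_{i,l}| ≤ c₂` and `β₁ − β₂` has at most `s` nonzero
coordinates, then `‖∇L(β₁) − ∇L(β₂)‖_∞ ≤ μ c₂² s ‖β₁ − β₂‖_∞`. -/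
theorem glm_grad_sparse_sup_bound
    {N p : ℕ} (hN : 0 < N)
    (X : Fin N → Fin p → ℝ) (y : Fin N → ℝ)
    (b : ℝ → ℝ) (μ : ℝ) (hμ : 0 < μ) (hb : ContDiff ℝ 2 b)
    (hb'' : ∀ θ : ℝ, 0 ≤ deriv (deriv b) θ ∧ deriv (deriv b) θ ≤ μ)
    (c₂ : ℝ) (hc₂ : 0 < c₂) (hX : ∀ i l, |X i l| ≤ c₂)
    (s : ℕ) (β₁ β₂ : Fin p → ℝ)
    (hsparse : {j | β₁ j ≠ β₂ j}.ncard ≤ s) :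
    ‖glmGradPi X y b β₁ - glmGradPi X y b β₂‖ ≤ μ * c₂ ^ 2 * s * ‖β₁ - β₂‖ :=
  glm_grad_sparse_sup_bound_general X y b μ hb hb'' c₂ hX s β₁ β₂ hsparse
end
end

section
/- (Exclusion of all points far from β*, combining local strong convexity with global convexity as in the proof of Theorem 3.) Let f : ℝ^p → ℝ be convex and twice continuously differentiable, let β* ∈ ℝ^p, r > 0 and c₁ > 0, and suppose that for every β with ‖β − β*‖₂ ≤ r and every w ∈ ℝ^p, wᵀ∇²f(β)w ≥ c₁‖w‖₂². If ‖∇f(β*)‖₂ < (c₁/2) r, then f(β) > f(β*) for every β with ‖β − β*‖₂ ≥ r. -/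
/-! Along the segment from `β*` to a point `z` at distance `r`, the Hessian bound gives
`f z ≥ f β* + Df(β*) (z - β*) + (c₁/2) r²`, and the linear term is at least
`-‖∇f(β*)‖ r > -(c₁/2) r²`, so `f z > f β*`. A point `β` farther out has such a `z` on the
segment `[β*, β]`, and convexity of `f` carries the strict inequality from `z` over to `β`. -/

open Set

theorem add_deriv_add_half_le_of_le_deriv2 {g g' g'' : ℝ → ℝ} {m : ℝ}
    (hg : ∀ t ∈ Icc (0 : ℝ) 1, HasDerivAt g (g' t) t)
    (hg' : ∀ t ∈ Icc (0 : ℝ) 1, HasDerivAt g' (g'' t) t)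
    (hm : ∀ t ∈ Icc (0 : ℝ) 1, m ≤ g'' t) :
    g 0 + g' 0 + m / 2 ≤ g 1 := by
  have h01 : (0 : ℝ) ∈ Icc (0 : ℝ) 1 := left_mem_Icc.2 zero_le_one
  have hint : interior (Icc (0 : ℝ) 1) ⊆ Icc 0 1 := interior_subset
  have hg'_ge : ∀ t ∈ Icc (0 : ℝ) 1, g' 0 + m * t ≤ g' t := by
    intro t ht
    have := (convex_Icc 0 1).mul_sub_le_image_sub_of_le_deriv
      (fun s hs => (hg' s hs).continuousAt.continuousWithinAt)
      (fun s hs => (hg' s (hint hs)).differentiableAt.differentiableWithinAt)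
      (fun s hs => (hg' s (hint hs)).deriv ▸ hm s (hint hs)) 0 h01 t ht ht.1
    linarith
  have hh : ∀ t ∈ Icc (0 : ℝ) 1, HasDerivAt (fun s => g s - m / 2 * s ^ 2) (g' t - m * t) t := by
    intro t ht
    refine ((hg t ht).sub (((hasDerivAt_id t).pow 2).const_mul (m / 2))).congr_deriv ?_
    simp only [id]
    ring
  have hmvt := (convex_Icc 0 1).mul_sub_le_image_sub_of_le_deriv (C := g' 0)
    (fun s hs => (hh s hs).continuousAt.continuousWithinAt)
    (fun s hs => (hh s (hint hs)).differentiableAt.differentiableWithinAt)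
    (fun s hs => by rw [(hh s (hint hs)).deriv]; linarith [hg'_ge s (hint hs)])
    0 h01 1 (right_mem_Icc.2 zero_le_one) zero_le_one
  linarith

variable {E : Type*} [NormedAddCommGroup E] [NormedSpace ℝ E]

theorem HasFDerivAt.hasDerivAt_comp_add_smul {F : Type*} [NormedAddCommGroup F]
    [NormedSpace ℝ F] {f : E → F} {f' : E →L[ℝ] F} {x v : E} {t : ℝ}
    (hf : HasFDerivAt f f' (x + t • v)) :
    HasDerivAt (fun s : ℝ => f (x + s • v)) (f' v) t := by
  simpa [Function.comp_def] using
    hf.comp_hasDerivAt t (((hasDerivAt_id t).smul_const v).const_add x)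

theorem add_fderiv_add_le_of_le_fderiv_fderiv {f : E → ℝ} (hf : Differentiable ℝ f)
    (hf' : Differentiable ℝ (fderiv ℝ f)) {x v : E} {m : ℝ}
    (hm : ∀ t ∈ Icc (0 : ℝ) 1, m ≤ fderiv ℝ (fderiv ℝ f) (x + t • v) v v) :
    f x + fderiv ℝ f x v + m / 2 ≤ f (x + v) := by
  simpa using add_deriv_add_half_le_of_le_deriv2 (g := fun s : ℝ => f (x + s • v)) (m := m)
    (fun t _ => (hf _).hasFDerivAt.hasDerivAt_comp_add_smul)
    (fun t _ => (((hf' _).hasFDerivAt.hasDerivAt_comp_add_smul).clm_apply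
      (hasDerivAt_const t v)).congr_deriv (by simp))
    hm

theorem lt_of_norm_sub_eq_of_le_fderiv_fderiv {f : E → ℝ} (hf : Differentiable ℝ f)
    (hf' : Differentiable ℝ (fderiv ℝ f)) {x₀ : E} {r c : ℝ} (hr : 0 < r)
    (hc : ∀ y ∈ Metric.closedBall x₀ r, ∀ w : E, c * ‖w‖ ^ 2 ≤ fderiv ℝ (fderiv ℝ f) y w w)
    (hgrad : ‖fderiv ℝ f x₀‖ < c / 2 * r) {y : E} (hy : ‖y - x₀‖ = r) :
    f x₀ < f y := by
  have hseg : ∀ t ∈ Icc (0 : ℝ) 1, x₀ + t • (y - x₀) ∈ Metric.closedBall x₀ r := by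
    intro t ht
    rw [Metric.mem_closedBall, dist_eq_norm, add_sub_cancel_left, norm_smul, hy,
      Real.norm_of_nonneg ht.1]
    exact mul_le_of_le_one_left hr.le ht.2
  have hquad := add_fderiv_add_le_of_le_fderiv_fderiv hf hf' (v := y - x₀) (m := c * r ^ 2)
    fun t ht => hy ▸ hc _ (hseg t ht) (y - x₀)
  have hlin : -(‖fderiv ℝ f x₀‖ * r) ≤ fderiv ℝ f x₀ (y - x₀) :=
    hy ▸ neg_le_of_abs_le ((fderiv ℝ f x₀).le_opNorm (y - x₀))
  rw [add_sub_cancel] at hquad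
  nlinarith

theorem ConvexOn.lt_of_lt_on_sphere {s : Set E} {f : E → ℝ} (hf : ConvexOn ℝ s f) {x y : E}
    (hx : x ∈ s) (hy : y ∈ s) {r : ℝ} (hr : 0 < r) (hsphere : ∀ z, ‖z - x‖ = r → f x < f z)
    (hxy : r ≤ ‖y - x‖) : f x < f y := by
  have hd : 0 < ‖y - x‖ := hr.trans_le hxy
  set t := r / ‖y - x‖
  have ht : 0 < t := div_pos hr hd
  have hz : ‖(1 - t) • x + t • y - x‖ = r := by
    rw [show (1 - t) • x + t • y - x = t • (y - x) by module, norm_smul,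
      Real.norm_of_nonneg ht.le, div_mul_cancel₀ _ hd.ne']
  have hconv := hf.2 hx hy (sub_nonneg.2 ((div_le_one hd).2 hxy)) ht.le (sub_add_cancel 1 t)
  have hxz := hsphere _ hz
  simp only [smul_eq_mul] at hconv
  have : t * f x < t * f y := by nlinarith
  exact lt_of_mul_lt_mul_left this ht.le

theorem norm_gradient {F : Type*} [NormedAddCommGroup F] [InnerProductSpace ℝ F]
    [CompleteSpace F] (f : F → ℝ) (x : F) : ‖gradient f x‖ = ‖fderiv ℝ f x‖ :=
  (InnerProductSpace.toDual ℝ F).symm.norm_map _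

theorem strong_convexity_excludes_far_points_general
    {p : ℕ} (f : EuclideanSpace ℝ (Fin p) → ℝ)
    (hconv : ConvexOn ℝ Set.univ f) (hf : ContDiff ℝ 2 f)
    (βs : EuclideanSpace ℝ (Fin p)) (r c₁ : ℝ) (hr : 0 < r)
    (hHess : ∀ β : EuclideanSpace ℝ (Fin p), ‖β - βs‖ ≤ r →
      ∀ w : EuclideanSpace ℝ (Fin p),
        c₁ * ‖w‖ ^ 2 ≤ fderiv ℝ (fun x => fderiv ℝ f x) β w w)
    (hgrad : ‖gradient f βs‖ < c₁ / 2 * r) :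
    ∀ β : EuclideanSpace ℝ (Fin p), r ≤ ‖β - βs‖ → f βs < f β := by
  have hf' : Differentiable ℝ (fderiv ℝ f) :=
    (hf.fderiv_right (m := 1) le_rfl).differentiable one_ne_zero
  intro β hβ
  refine hconv.lt_of_lt_on_sphere (mem_univ _) (mem_univ _) hr (fun z hz => ?_) hβ
  exact lt_of_norm_sub_eq_of_le_fderiv_fderiv (hf.differentiable two_ne_zero) hf' hr
    (fun y hy => hHess y (mem_closedBall_iff_norm.1 hy)) (norm_gradient f βs ▸ hgrad) hz

/-- Exclusion of all points far from `β*` (proof of Theorem 3): combining local strong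
convexity on the ball of radius `r` with global convexity, a small gradient at `β*`
forces `f(β) > f(β*)` for every `β` with `‖β − β*‖₂ ≥ r`. -/
theorem strong_convexity_excludes_far_points
    {p : ℕ} (f : EuclideanSpace ℝ (Fin p) → ℝ)
    (hconv : ConvexOn ℝ Set.univ f) (hf : ContDiff ℝ 2 f)
    (βs : EuclideanSpace ℝ (Fin p)) (r c₁ : ℝ) (hr : 0 < r) (hc₁ : 0 < c₁)
    (hHess : ∀ β : EuclideanSpace ℝ (Fin p), ‖β - βs‖ ≤ r →
      ∀ w : EuclideanSpace ℝ (Fin p),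
        c₁ * ‖w‖ ^ 2 ≤ fderiv ℝ (fun x => fderiv ℝ f x) β w w)
    (hgrad : ‖gradient f βs‖ < c₁ / 2 * r) :
    ∀ β : EuclideanSpace ℝ (Fin p), r ≤ ‖β - βs‖ → f βs < f β :=
  strong_convexity_excludes_far_points_general f hconv hf βs r c₁ hr hHess hgrad
end

section
/- (Support retention under hard thresholding, core deterministic step of Theorem 4.) Let β* ∈ ℝ^p with support S* = {j : β*_j ≠ 0} of cardinality q ≥ 1, and set d = min_{j ∈ S*} |β*_j|. Let γ ∈ ℝ^p satisfy ‖γ − β*‖_∞ < d/2, and let k satisfy q ≤ k ≤ p. Then for every set T ⊆ {1, …, p} with card(T) = k satisfying min_{j ∈ T} |γ_j| ≥ max_{j ∉ T} |γ_j| (i.e., T consists of indices of the k largest-magnitude components of γ), one has S* ⊆ T. -/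
open scoped BigOperators

noncomputable section

/-- Support retention under hard thresholding (core deterministic step of Theorem 4):
if `‖γ − β*‖_∞ < d/2` where `d = min_{j ∈ S*} |β*ⱼ|`, and `T` is a set of `k ≥ q`
indices of the `k` largest-magnitude components of `γ`, then `S* ⊆ T`.  Here
`Fin p → ℝ` carries the sup-norm. -/
theorem support_retention_hard_threshold
    {p : ℕ} (βs : Fin p → ℝ)
    (q : ℕ) (hq : {j | βs j ≠ 0}.ncard = q) (hq1 : 1 ≤ q)
    (d : ℝ) (hd : IsLeast {x : ℝ | ∃ j : Fin p, βs j ≠ 0 ∧ x = |βs j|} d)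
    (γ : Fin p → ℝ) (hγ : ‖γ - βs‖ < d / 2)
    (k : ℕ) (hqk : q ≤ k) (hkp : k ≤ p)
    (T : Finset (Fin p)) (hT : T.card = k)
    (hTlarge : ∀ j ∈ T, ∀ j' ∉ T, |γ j'| ≤ |γ j|) :
    ∀ j : Fin p, βs j ≠ 0 → j ∈ T := by
  -- Setup: the support as a Finset
  classical
  set S : Finset (Fin p) := Finset.univ.filter (fun j => βs j ≠ 0) with hS
  have hScard : S.card = q := by
    rw [← hq]
    have : {j | βs j ≠ 0} = ↑S := by
      ext j; simp [hS]
    rw [this, Set.ncard_coe_finset]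
  have hd0 : 0 < d := by
    obtain ⟨⟨j0, hj0, hj0'⟩, _⟩ := hd
    rw [hj0']; exact abs_pos.mpr hj0
  have hpert : ∀ i : Fin p, |γ i - βs i| < d / 2 := by
    intro i
    have := norm_le_pi_norm (γ - βs) i
    simp only [Pi.sub_apply, Real.norm_eq_abs] at this
    linarith
  -- |γ j| > d/2 for support indices
  have hbig : ∀ j : Fin p, βs j ≠ 0 → d / 2 < |γ j| := by
    intro j hj
    have h1 : d ≤ |βs j| := hd.2 ⟨j, hj, rfl⟩
    have h2 := hpert j
    have := abs_sub_abs_le_abs_sub (βs j) (γ j)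
    rw [abs_sub_comm] at this
    linarith
  -- |γ j'| < d/2 for non-support indices
  have hsmall : ∀ j' : Fin p, βs j' = 0 → |γ j'| < d / 2 := by
    intro j' hj'
    have := hpert j'
    rw [hj', sub_zero] at this
    exact this
  intro j hj
  by_contra hjT
  -- T cannot be contained in S \ {j}
  have hnotsub : ¬ (T ⊆ S.erase j) := by
    intro hsub
    have := Finset.card_le_card hsub
    have h2 : (S.erase j).card < S.card := by
      apply Finset.card_erase_lt_of_mem
      simp [hS, hj]
    omega
  obtain ⟨j', hj'T, hj'ns⟩ := Finset.not_subset.mp hnotsub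
  have hj'S : βs j' = 0 := by
    by_contra h
    have hj'mem : j' ∈ S := by simp [hS, h]
    have : j' ≠ j := fun e => hjT (e ▸ hj'T)
    exact hj'ns (Finset.mem_erase.mpr ⟨this, hj'mem⟩)
  have h1 := hTlarge j' hj'T j hjT
  have h2 := hbig j hj
  have h3 := hsmall j' hj'S
  linarith
end
end
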